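/- In the braid group B(Ã_n), the element σ_n σ_{n−1} ⋯ σ_1 a_{n+1} conjugates the subgroup B(Ã_{n−1}) (generated by σ_1,…,σ_{n−1} and a_n = σ_n a_{n+1} σ_n^{-1}) into itself; explicitly, conjugation by (σ_n ⋯ σ_1 a_{n+1}) induces an automorphism ψ of B(Ã_{n−1}), so that for all h ∈ B(Ã_{n−1}): (σ_n ⋯ σ_1 a_{n+1}) h = ψ[h] (σ_n ⋯ σ_1 a_{n+1}). -/

import Mathlib

/-- The defining relators of the affine braid group of type `Ãₙ`: generators indexed by
`Fin (n+1)` arranged in a cycle; cyclically adjacent generators satisfy the braid relation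
`xyx = yxy`, all other pairs commute. -/
def affineBraidRels (n : ℕ) : Set (FreeGroup (Fin (n + 1))) :=
  { r | ∃ i j : Fin (n + 1),
      ((i - j = 1 ∨ j - i = 1) ∧
        r = FreeGroup.of i * FreeGroup.of j * FreeGroup.of i *
          (FreeGroup.of j * FreeGroup.of i * FreeGroup.of j)⁻¹) ∨
      (i ≠ j ∧ ¬(i - j = 1 ∨ j - i = 1) ∧
        r = FreeGroup.of i * FreeGroup.of j * (FreeGroup.of j * FreeGroup.of i)⁻¹) }

/-- The affine braid group `B(Ãₙ)`. -/
def AffineBraidGroup (n : ℕ) : Type := PresentedGroup (affineBraidRels n)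

instance (n : ℕ) : Group (AffineBraidGroup n) := by
  unfold AffineBraidGroup; infer_instance

open Fin.NatCast in
/-- The generator with 1-based subscript `k`: `σ_k` for `1 ≤ k ≤ n`, and `a_{n+1}` for
`k = n + 1`. -/
def bgen (n : ℕ) (k : ℕ) : AffineBraidGroup n :=
  PresentedGroup.of ((k - 1 : ℕ) : Fin (n + 1))

/-- The product of the generators with the given (1-based) subscripts. -/
def bword (n : ℕ) (l : List ℕ) : AffineBraidGroup n := (l.map (bgen n)).prod

/-- The decreasing word `[i, i-1, ..., j]` of (1-based) generator subscripts. -/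
def decW (i j : ℕ) : List ℕ := (List.range' j (i + 1 - j)).reverse

/-- The increasing word `[i, i+1, ..., j]` of (1-based) generator subscripts. -/
def incW (i j : ℕ) : List ℕ := List.range' i (j + 1 - i)

/-!
Conjugation by `δ = σₙ ⋯ σ₁ a_{n+1}` permutes the generators of `B(Ãₙ₋₁)` cyclically:
`σₖ ↦ σₖ₋₁` for `2 ≤ k ≤ n - 1`, `σ₁ ↦ aₙ` and `aₙ ↦ σₙ₋₁`. Each of these follows from one
braid relation together with commutations of distant generators, the key one being that
`σₙ ⋯ σ₁` conjugates `σₖ₊₁` to `σₖ`. Hence `δ` maps the generating set onto itself, and so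
the generated subgroup onto itself.
-/

open Fin.NatCast in
theorem Fin.natCast_sub_natCast_eq_one_iff {m a b : ℕ} (ha : a < m + 1) :
    (a : Fin (m + 1)) - b = 1 ↔ a = (b + 1) % (m + 1) := by
  rw [sub_eq_iff_eq_add', ← Nat.cast_add_one, Fin.ext_iff, Fin.val_natCast, Fin.val_natCast,
    Nat.mod_eq_of_lt ha]

theorem MulAut.conj_apply_eq_of_mul_eq {G : Type*} [Group G] {g x y : G} (h : g * x = y * g) :
    MulAut.conj g x = y := by
  rw [MulAut.conj_apply, h, mul_inv_cancel_right]

namespace AffineBraidGroup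

open Fin.NatCast

theorem of_mul_of_mul_of {n : ℕ} {i j : Fin (n + 1)} (h : i - j = 1 ∨ j - i = 1) :
    (PresentedGroup.of i : AffineBraidGroup n) * .of j * .of i = .of j * .of i * .of j :=
  mul_inv_eq_one.mp <| (QuotientGroup.eq_one_iff _).mpr <|
    Subgroup.subset_normalClosure ⟨i, j, .inl ⟨h, rfl⟩⟩

theorem commute_of_of {n : ℕ} {i j : Fin (n + 1)} (hij : i ≠ j)
    (h : ¬(i - j = 1 ∨ j - i = 1)) :
    Commute (PresentedGroup.of i : AffineBraidGroup n) (.of j) :=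
  mul_inv_eq_one.mp <| (QuotientGroup.eq_one_iff _).mpr <|
    Subgroup.subset_normalClosure ⟨i, j, .inr ⟨hij, h, rfl⟩⟩

theorem bgen_braid {n k : ℕ} (hk : 1 ≤ k) (hkn : k ≤ n) :
    bgen n k * bgen n (k + 1) * bgen n k = bgen n (k + 1) * bgen n k * bgen n (k + 1) := by
  refine of_mul_of_mul_of (.inr ?_)
  rw [Fin.natCast_sub_natCast_eq_one_iff (by omega), Nat.mod_eq_of_lt (by omega)]
  omega

theorem bgen_braid_last_first {n : ℕ} (hn : 1 ≤ n) :
    bgen n (n + 1) * bgen n 1 * bgen n (n + 1) = bgen n 1 * bgen n (n + 1) * bgen n 1 := by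
  refine of_mul_of_mul_of (.inr ?_)
  rw [Fin.natCast_sub_natCast_eq_one_iff (by omega), Nat.sub_add_cancel (by omega), Nat.mod_self]

theorem bgen_commute {n k l : ℕ} (hk : 1 ≤ k) (hkl : k + 2 ≤ l) (hl : l ≤ n + 1)
    (hkl' : ¬(k = 1 ∧ l = n + 1)) : Commute (bgen n k) (bgen n l) := by
  have hval : ∀ {i}, i < n + 1 → ((i : Fin (n + 1)) : ℕ) = i := fun hi => Nat.mod_eq_of_lt hi
  refine commute_of_of (fun h => ?_) ?_
  · have := congrArg Fin.val h
    rw [hval (by omega), hval (by omega)] at this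
    omega
  · rw [Fin.natCast_sub_natCast_eq_one_iff (by omega),
      Fin.natCast_sub_natCast_eq_one_iff (by omega), Nat.sub_add_cancel hk, Nat.mod_eq_of_lt (by omega : k < n + 1)]
    rcases Nat.lt_or_ge l (n + 1) with hl' | hl'
    · rw [Nat.sub_add_cancel (by omega), Nat.mod_eq_of_lt hl']
      omega
    · rw [Nat.sub_add_cancel (by omega), show l = n + 1 by omega, Nat.mod_self]
      omega

@[simp]
theorem bword_nil {n : ℕ} : bword n [] = 1 := rfl

@[simp]
theorem bword_cons {n : ℕ} (k : ℕ) (l : List ℕ) : bword n (k :: l) = bgen n k * bword n l := by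
  simp [bword]

@[simp]
theorem bword_append {n : ℕ} (l₁ l₂ : List ℕ) :
    bword n (l₁ ++ l₂) = bword n l₁ * bword n l₂ := by
  simp [bword]

theorem bword_commute {n : ℕ} {l : List ℕ} {x : AffineBraidGroup n}
    (h : ∀ k ∈ l, Commute (bgen n k) x) : Commute (bword n l) x :=
  Commute.list_prod_left _ _ <| by simpa [List.forall_mem_map] using h

theorem mem_decW {i j k : ℕ} : k ∈ decW i j ↔ j ≤ k ∧ k ≤ i := by
  rw [decW, List.mem_reverse, List.mem_range'_1]
  omega

theorem decW_succ {i j : ℕ} (h : j ≤ i + 1) : decW (i + 1) j = (i + 1) :: decW i j := by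
  rw [decW, decW, show i + 1 + 1 - j = i + 1 - j + 1 by omega, List.range'_concat]
  simp only [List.reverse_append, List.reverse_singleton, List.singleton_append, one_mul]
  congr 1
  omega

theorem decW_eq_append {i j : ℕ} (h : j ≤ i) : decW i j = decW i (j + 1) ++ [j] := by
  rw [decW, decW, show i + 1 - j = i + 1 - (j + 1) + 1 by omega, List.range'_succ]
  simp

/-- `σᵢ ⋯ σ₁` shifts the subscripts `2, …, i` down by one under conjugation. -/
theorem bword_decW_mul_bgen_succ {n : ℕ} :
    ∀ {i k : ℕ}, 1 ≤ k → k < i → i ≤ n →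
      bword n (decW i 1) * bgen n (k + 1) = bgen n k * bword n (decW i 1)
  | 0, _, _, hki, _ => absurd hki (Nat.not_lt_zero _)
  | i + 1, k, hk, hki, hin => by
    rw [decW_succ (by omega), bword_cons]
    rcases Nat.lt_or_ge k i with hki' | hik
    · rw [mul_assoc, bword_decW_mul_bgen_succ hk hki' (by omega), ← mul_assoc,
        ← (bgen_commute hk (by omega) (by omega) (by omega)).eq, mul_assoc]
    · obtain rfl : k = i := by omega
      obtain ⟨j, rfl⟩ : ∃ j, k = j + 1 := ⟨k - 1, by omega⟩
      rw [decW_succ (by omega), bword_cons]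
      set W := bword n (decW j 1)
      set s := bgen n (j + 1)
      set t := bgen n (j + 1 + 1)
      have hcomm : Commute W t := bword_commute fun m hm => by
        obtain ⟨h1m, hmj⟩ := mem_decW.1 hm
        exact bgen_commute h1m (by omega) (by omega) (by omega)
      have hbraid : s * t * s = t * s * t := bgen_braid (by omega) (by omega)
      calc t * (s * W) * t
          = t * s * (W * t) := by group
        _ = t * s * t * W := by rw [hcomm.eq]; group
        _ = s * t * s * W := by rw [hbraid]
        _ = s * (t * (s * W)) := by group

def delta (n : ℕ) : AffineBraidGroup n := bword n (decW n 1) * bgen n (n + 1)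

def aGen (n : ℕ) : AffineBraidGroup n := bgen n n * bgen n (n + 1) * (bgen n n)⁻¹

def subgroupGens (n : ℕ) : Set (AffineBraidGroup n) :=
  {x | ∃ k, 1 ≤ k ∧ k ≤ n - 1 ∧ x = bgen n k} ∪ {aGen n}

theorem bword_decW_append (n : ℕ) : bword n (decW n 1 ++ [n + 1]) = delta n := by
  simp [delta]

theorem delta_mul_bgen_succ {n k : ℕ} (hk : 1 ≤ k) (hkn : k + 2 ≤ n) :
    delta n * bgen n (k + 1) = bgen n k * delta n := by
  rw [delta, mul_assoc, ← (bgen_commute (by omega) (by omega) le_rfl (by omega)).eq,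
    ← mul_assoc, bword_decW_mul_bgen_succ hk (by omega) le_rfl, mul_assoc]

theorem delta_mul_bgen_one {n : ℕ} (hn : 2 ≤ n) :
    delta n * bgen n 1 = aGen n * delta n := by
  obtain ⟨m, rfl⟩ : ∃ m, n = m + 1 := ⟨n - 1, by omega⟩
  set M := bword (m + 1) (decW m 2)
  set A := bgen (m + 1) (m + 1 + 1)
  set σ₁ := bgen (m + 1) 1
  set σₙ := bgen (m + 1) (m + 1)
  have hcomm : Commute M A := bword_commute fun k hk => by
    obtain ⟨h2k, hkm⟩ := mem_decW.1 hk
    exact bgen_commute (by omega) (by omega) le_rfl (by omega)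
  have hdelta : delta (m + 1) = σₙ * (M * σ₁) * A := by
    rw [delta, decW_succ (by omega), decW_eq_append (by omega)]
    simp [M, σ₁, σₙ, A]
  have hbraid : σ₁ * A * σ₁ = A * σ₁ * A := (bgen_braid_last_first (by omega)).symm
  calc delta (m + 1) * σ₁
      = σₙ * M * (σ₁ * A * σ₁) := by rw [hdelta]; group
    _ = σₙ * (M * A) * (σ₁ * A) := by rw [hbraid]; group
    _ = σₙ * A * σₙ⁻¹ * delta (m + 1) := by rw [hcomm.eq, hdelta]; group

theorem delta_mul_aGen {n : ℕ} (hn : 2 ≤ n) :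
    delta n * aGen n = bgen n (n - 1) * delta n := by
  have hshift := bword_decW_mul_bgen_succ (n := n) (k := n - 1) (by omega) (by omega) le_rfl
  rw [Nat.sub_add_cancel (by omega)] at hshift
  calc delta n * aGen n
      = bword n (decW n 1) * (bgen n (n + 1) * bgen n n * bgen n (n + 1)) * (bgen n n)⁻¹ := by
        rw [delta, aGen]; group
    _ = bword n (decW n 1) * bgen n n * bgen n (n + 1) := by
        rw [← bgen_braid (by omega) le_rfl]; group
    _ = bgen n (n - 1) * delta n := by
        rw [hshift, delta, mul_assoc]

theorem conj_delta_image_subgroupGens {n : ℕ} (hn : 2 ≤ n) :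
    MulAut.conj (delta n) '' subgroupGens n = subgroupGens n := by
  apply Set.Subset.antisymm
  · rintro _ ⟨x, ⟨_ | _ | k, hk, hkn, rfl⟩ | rfl, rfl⟩
    · omega
    · exact .inr (MulAut.conj_apply_eq_of_mul_eq (delta_mul_bgen_one hn))
    · exact .inl ⟨k + 1, by omega, by omega,
        MulAut.conj_apply_eq_of_mul_eq (delta_mul_bgen_succ (by omega) (by omega))⟩
    · exact .inl ⟨n - 1, by omega, le_rfl, MulAut.conj_apply_eq_of_mul_eq (delta_mul_aGen hn)⟩
  · rintro y (⟨k, hk, hkn, rfl⟩ | rfl)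
    · rcases Nat.lt_or_ge k (n - 1) with hkn' | hkn'
      · exact ⟨bgen n (k + 1), .inl ⟨k + 1, by omega, by omega, rfl⟩,
          MulAut.conj_apply_eq_of_mul_eq (delta_mul_bgen_succ hk (by omega))⟩
      · obtain rfl : k = n - 1 := by omega
        exact ⟨aGen n, .inr rfl, MulAut.conj_apply_eq_of_mul_eq (delta_mul_aGen hn)⟩
    · exact ⟨bgen n 1, .inl ⟨1, le_rfl, by omega, rfl⟩,
        MulAut.conj_apply_eq_of_mul_eq (delta_mul_bgen_one hn)⟩

end AffineBraidGroup

/-- Conjugation by `δ = σₙσₙ₋₁ ⋯ σ₁ a_{n+1}` maps the copy of `B(Ãₙ₋₁)` inside `B(Ãₙ)`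
(the subgroup generated by `σ₁, …, σₙ₋₁` and `aₙ = σₙ a_{n+1} σₙ⁻¹`) onto itself, i.e. it
induces an automorphism `ψ` of this subgroup, so `δ h = ψ[h] δ` for all `h` in it. -/
theorem conj_delta_preserves_subgroup (n : ℕ) (hn : 2 ≤ n) :
    Subgroup.map (MulAut.conj (bword n (decW n 1 ++ [n + 1]))).toMonoidHom
      (Subgroup.closure
        ({x | ∃ k, 1 ≤ k ∧ k ≤ n - 1 ∧ x = bgen n k} ∪
          {bgen n n * bgen n (n + 1) * (bgen n n)⁻¹})) =
    Subgroup.closure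
      ({x | ∃ k, 1 ≤ k ∧ k ≤ n - 1 ∧ x = bgen n k} ∪
        {bgen n n * bgen n (n + 1) * (bgen n n)⁻¹}) := by
  rw [AffineBraidGroup.bword_decW_append, MonoidHom.map_closure]
  exact congrArg Subgroup.closure (AffineBraidGroup.conj_delta_image_subgroupGens hn)
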